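/- arXiv:2412.13789 — 9 statements merged into one kernel-verified Lean document; each statement's English description precedes it below -/
import Mathlib

section
/- Let M be an additive abelian group and S a submonoid of M. Then the following two conditions are equivalent: (1) for every m ∈ M, if 2•m ∈ S and 3•m ∈ S then m ∈ S; (2) for every m ∈ M, if there exists k ∈ ℕ such that k'•m ∈ S for all integers k' > k, then m ∈ S. -/
/-! Since `2 • m` and `3 • m` lie in `S`, so does every `n • m` with `n ≥ 2`, the numbers
`2` and `3` generating all of them additively. Conversely, if `k' • m ∈ S` for all `k' > k + 1`,
then `2 • ((k + 1) • m)` and `3 • ((k + 1) • m)` lie in `S`, so semisaturation puts `(k + 1) • m`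
in `S`; descending on `k` reaches `m` itself. -/

namespace AddSubmonoid

variable {M : Type*} [AddMonoid M]

def IsSemisaturated (S : AddSubmonoid M) : Prop :=
  ∀ m : M, 2 • m ∈ S → 3 • m ∈ S → m ∈ S

variable {S : AddSubmonoid M} {m : M}

theorem nsmul_mem_of_two_nsmul_mem_of_three_nsmul_mem (h2 : 2 • m ∈ S) (h3 : 3 • m ∈ S)
    {n : ℕ} (hn : 2 ≤ n) : n • m ∈ S := by
  obtain ⟨k, rfl | rfl⟩ := Nat.even_or_odd' n
  · rw [mul_nsmul]
    exact nsmul_mem h2 k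
  · obtain ⟨j, rfl⟩ : ∃ j, k = j + 1 := ⟨k - 1, by omega⟩
    have hsplit : (2 * (j + 1) + 1) • m = j • (2 • m) + 3 • m := by
      rw [← mul_nsmul, ← add_nsmul]
      ring_nf
    rw [hsplit]
    exact add_mem (nsmul_mem h2 j) h3

theorem IsSemisaturated.mem_of_forall_lt_nsmul_mem (hS : S.IsSemisaturated) {k : ℕ}
    (hk : ∀ k', k < k' → k' • m ∈ S) : m ∈ S := by
  induction k with
  | zero => simpa using hk 1 one_pos
  | succ k ih =>
    refine ih fun k' hk' => ?_
    rcases (Nat.succ_le_of_lt hk').eq_or_lt with rfl | hlt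
    · refine hS _ ?_ ?_ <;> rw [← mul_nsmul'] <;> exact hk _ (by omega)
    · exact hk _ hlt

end AddSubmonoid

/-- A submonoid `S` of an additive abelian group `M` satisfying condition (1)
is called *semisaturated* in `M`. The two conditions are equivalent. -/
theorem semisaturated_iff {M : Type*} [AddCommGroup M] (S : AddSubmonoid M) :
    (∀ m : M, 2 • m ∈ S → 3 • m ∈ S → m ∈ S) ↔
    (∀ m : M, (∃ k : ℕ, ∀ k' : ℕ, k < k' → k' • m ∈ S) → m ∈ S) :=
  ⟨fun hS _ ⟨_, hk⟩ => AddSubmonoid.IsSemisaturated.mem_of_forall_lt_nsmul_mem hS hk,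
    fun h m h2 h3 => h m
      ⟨1, fun _ hk' => AddSubmonoid.nsmul_mem_of_two_nsmul_mem_of_three_nsmul_mem h2 h3 hk'⟩⟩
end

section
/- Let S be a submonoid of an additive commutative monoid. Then S + Int(S) = Int(S), i.e. the set {s + x : s ∈ S, x ∈ Int(S)} equals Int(S). -/
open Pointwise

/-- The *interior* of a subset `S` of an additive commutative monoid:
`{x ∈ S | ∀ y ∈ S, ∃ n ∈ ℕ, ∃ z ∈ S, n • x = y + z}`. -/
def setInterior {M : Type*} [AddCommMonoid M] (S : Set M) : Set M :=
  {x | x ∈ S ∧ ∀ y ∈ S, ∃ n : ℕ, ∃ z ∈ S, n • x = y + z}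

-- If `n • x = y + z`, then `n • (s + x) = y + (z + n • s)` with `z + n • s ∈ S`.
theorem add_mem_setInterior {M : Type*} [AddCommMonoid M] {S : AddSubmonoid M} {s x : M}
    (hs : s ∈ S) (hx : x ∈ setInterior (S : Set M)) : s + x ∈ setInterior (S : Set M) := by
  obtain ⟨hxS, hx⟩ := hx
  refine ⟨S.add_mem hs hxS, fun y hy => ?_⟩
  obtain ⟨n, z, hz, hn⟩ := hx y hy
  refine ⟨n, z + n • s, S.add_mem hz (S.nsmul_mem hs n), ?_⟩
  rw [smul_add, hn]
  abel

/-- For a submonoid `S` of an additive commutative monoid, `S + Int(S) = Int(S)`. -/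
theorem add_setInterior {M : Type*} [AddCommMonoid M] (S : AddSubmonoid M) :
    (S : Set M) + setInterior (S : Set M) = setInterior (S : Set M) :=
  (Set.add_subset_iff.2 fun _ hs _ hx => add_mem_setInterior hs hx).antisymm
    (Set.subset_add_right _ S.zero_mem)
end

section
/- Let M be an additive abelian group, S a submonoid of M, and m an element of the subgroup of M generated by S. If there exists an integer k ≥ 1 such that k•m ∈ Int(S), then there exists N ∈ ℕ such that n•m ∈ S for every integer n ≥ N. -/
/-!
Write `m = s - t` with `s, t ∈ S` and let `x = k • m ∈ Int(S)`. For every `i`, some multiple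
`c • x` absorbs `i • t`, i.e. `c • x = i • t + z` with `z ∈ S`, so `(c * k + i) • m = i • s + z ∈ S`.
Hence `{n | n • m ∈ S}` is a submonoid of `ℕ` containing `k` and meeting every residue class
modulo `k`, and such a submonoid contains all large `n`.
-/

theorem AddSubmonoid.exists_forall_ge_mem_of_forall_exists_modEq (T : AddSubmonoid ℕ) {k : ℕ}
    (hk : 0 < k) (hkT : k ∈ T) (hres : ∀ i, ∃ a ∈ T, a ≡ i [MOD k]) :
    ∃ N, ∀ n, N ≤ n → n ∈ T := by
  choose a haT hamod using hres
  refine ⟨(Finset.range k).sup a, fun n hn => ?_⟩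
  set b := a (n % k)
  have hbn : b ≤ n :=
    (Finset.le_sup (Finset.mem_range.mpr (Nat.mod_lt n hk))).trans hn
  have hbn_mod : b ≡ n [MOD k] := (hamod _).trans (Nat.mod_modEq n k)
  obtain ⟨q, hq⟩ := (Nat.modEq_iff_dvd' hbn).mp hbn_mod
  have hn_eq : n = b + q • k := by rw [smul_eq_mul, mul_comm, ← hq]; omega
  rw [hn_eq]
  exact T.add_mem (haT _) (T.nsmul_mem hkT q)

theorem AddSubmonoid.exists_sub_of_mem_closure {M : Type*} [AddCommGroup M]
    (S : AddSubmonoid M) {m : M} (hm : m ∈ AddSubgroup.closure (S : Set M)) :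
    ∃ s ∈ S, ∃ t ∈ S, m = s - t := by
  induction hm using AddSubgroup.closure_induction with
  | mem x hx => exact ⟨x, hx, 0, S.zero_mem, (sub_zero x).symm⟩
  | zero => exact ⟨0, S.zero_mem, 0, S.zero_mem, (sub_zero 0).symm⟩
  | add x y _ _ hx hy =>
    obtain ⟨a, ha, b, hb, rfl⟩ := hx
    obtain ⟨c, hc, d, hd, rfl⟩ := hy
    exact ⟨a + c, S.add_mem ha hc, b + d, S.add_mem hb hd, by abel⟩
  | neg x _ hx =>
    obtain ⟨a, ha, b, hb, rfl⟩ := hx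
    exact ⟨b, hb, a, ha, neg_sub a b⟩

theorem exists_nsmul_add_mem_of_mem_setInterior {M : Type*} [AddCommGroup M]
    (S : AddSubmonoid M) {x y : M} (hx : x ∈ setInterior (S : Set M))
    (hy : y ∈ AddSubgroup.closure (S : Set M)) : ∃ c : ℕ, c • x + y ∈ S := by
  obtain ⟨s, hs, t, ht, rfl⟩ := S.exists_sub_of_mem_closure hy
  obtain ⟨c, z, hz, hcx⟩ := hx.2 t ht
  refine ⟨c, ?_⟩
  have hc : c • x + (s - t) = s + z := by rw [hcx]; abel
  rw [hc]
  exact S.add_mem hs hz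

/-- If `m` lies in the subgroup generated by `S` and some positive multiple of `m`
lies in `Int(S)`, then `n • m ∈ S` for all `n` large enough. -/
theorem nsmul_mem_of_nsmul_mem_setInterior {M : Type*} [AddCommGroup M]
    (S : AddSubmonoid M) (m : M) (hm : m ∈ AddSubgroup.closure (S : Set M))
    (h : ∃ k : ℕ, 1 ≤ k ∧ k • m ∈ setInterior (S : Set M)) :
    ∃ N : ℕ, ∀ n : ℕ, N ≤ n → n • m ∈ S := by
  obtain ⟨k, hk, hkm⟩ := h
  let T : AddSubmonoid ℕ := S.comap (multiplesHom M m)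
  have hmemT (n : ℕ) : n ∈ T ↔ n • m ∈ S := by simp [T]
  have hres (i : ℕ) : ∃ a ∈ T, a ≡ i [MOD k] := by
    obtain ⟨c, hc⟩ := exists_nsmul_add_mem_of_mem_setInterior S hkm
      (AddSubgroup.nsmul_mem _ hm i)
    refine ⟨c * k + i, ?_, by simp [Nat.ModEq]⟩
    rwa [hmemT, add_smul, mul_smul]
  simpa only [hmemT] using
    T.exists_forall_ge_mem_of_forall_exists_modEq hk ((hmemT k).mpr hkm.1) hres
end

section
/- Let e₁,…,e_m ∈ ℝ^d be linearly independent vectors with integer coordinates, let τ := {Σᵢ λᵢeᵢ : λᵢ ≥ 0 for all i}, let W := span_ℝ{e₁,…,e_m}, and let G be a finite-index additive subgroup of ℤ^d ∩ W. Then for every x ∈ Int(G ∩ τ) and every g ∈ G there exists n ∈ ℕ such that g + n•x ∈ G ∩ τ. -/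
/-- The subgroup `ℤ^d ⊆ ℝ^d` of vectors with integer coordinates. -/
def intLattice (d : ℕ) : AddSubgroup (Fin d → ℝ) where
  carrier := {x | ∀ i, ∃ z : ℤ, x i = (z : ℝ)}
  zero_mem' := fun i => ⟨0, by simp⟩
  add_mem' := by
    intro a b ha hb i
    obtain ⟨z, hz⟩ := ha i
    obtain ⟨w, hw⟩ := hb i
    exact ⟨z + w, by simp [hz, hw]⟩
  neg_mem' := by
    intro a ha i
    obtain ⟨z, hz⟩ := ha i
    exact ⟨-z, by simp [hz]⟩

/-- Let `τ` be the cone generated by linearly independent integral vectors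
`e₁,…,e_m`, `W` their span, and `G` a finite-index subgroup of `ℤ^d ∩ W`.
Then for every `x ∈ Int(G ∩ τ)` and every `g ∈ G` there is `n ∈ ℕ` with
`g + n • x ∈ G ∩ τ`. -/
theorem exists_nsmul_add_mem (d m : ℕ) (e : Fin m → (Fin d → ℝ))
    (hindep : LinearIndependent ℝ e)
    (hint : ∀ i j, ∃ z : ℤ, e i j = (z : ℝ))
    (τ : Set (Fin d → ℝ))
    (hτ : τ = {x | ∃ lam : Fin m → ℝ, (∀ i, 0 ≤ lam i) ∧ x = ∑ i, lam i • e i})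
    (G : AddSubgroup (Fin d → ℝ))
    (hle : G ≤ intLattice d ⊓ (Submodule.span ℝ (Set.range e)).toAddSubgroup)
    (hfin : (G.addSubgroupOf
      (intLattice d ⊓ (Submodule.span ℝ (Set.range e)).toAddSubgroup)).FiniteIndex) :
    ∀ x ∈ setInterior ((G : Set (Fin d → ℝ)) ∩ τ), ∀ g ∈ G,
      ∃ n : ℕ, g + n • x ∈ (G : Set (Fin d → ℝ)) ∩ τ := by
  classical
  set L := intLattice d ⊓ (Submodule.span ℝ (Set.range e)).toAddSubgroup with hLdef
  intro x hx g hg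
  obtain ⟨⟨hxG, hxτ⟩, hxint⟩ := hx
  set N := (G.addSubgroupOf L).index with hNdef
  have hNpos : 0 < N := Nat.pos_of_ne_zero hfin.index_ne_zero
  have heL : ∀ i, e i ∈ L := fun i =>
    ⟨fun j => hint i j, Submodule.subset_span (Set.mem_range_self i)⟩
  -- N • e i lies in G ∩ τ
  have hNe : ∀ i, (N • e i) ∈ (G : Set (Fin d → ℝ)) ∩ τ := by
    intro i
    constructor
    · have h := (G.addSubgroupOf L).nsmul_index_mem (⟨e i, heL i⟩ : L)
      simpa [AddSubgroup.mem_addSubgroupOf] using h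
    · rw [hτ]
      refine ⟨fun j => if j = i then (N : ℝ) else 0, fun j => by positivity, ?_⟩
      simp only [ite_smul, zero_smul]
      rw [Finset.sum_ite_eq' Finset.univ i fun j => (N : ℝ) • e j,
        if_pos (Finset.mem_univ i), Nat.cast_smul_eq_nsmul]
  -- coefficients of x
  obtain ⟨lam, hlam0, hxeq⟩ := hτ ▸ hxτ
  -- each coefficient of x is strictly positive
  have hlampos : ∀ i, 0 < lam i := by
    intro i
    obtain ⟨n, z, ⟨hzG, hzτ⟩, heqn⟩ := hxint (N • e i) (hNe i)
    obtain ⟨ζ, hζ0, hzeq⟩ := hτ ▸ hzτ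
    have hkey : ∀ j, (n : ℝ) * lam j - ((if j = i then (N : ℝ) else 0) + ζ j) = 0 := by
      have hsum : ∑ j, ((n : ℝ) * lam j - ((if j = i then (N : ℝ) else 0) + ζ j)) • e j
          = 0 := by
        have h1 : (n : ℕ) • x = ∑ j, ((n : ℝ) * lam j) • e j := by
          rw [hxeq, Finset.smul_sum]
          exact Finset.sum_congr rfl fun j _ => by
            rw [← Nat.cast_smul_eq_nsmul ℝ, smul_smul]
        have h2 : N • e i + z = ∑ j, ((if j = i then (N : ℝ) else 0) + ζ j) • e j := by
          rw [hzeq]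
          rw [Finset.sum_congr rfl fun j _ => add_smul ((if j = i then (N : ℝ) else 0)) (ζ j) (e j)]
          rw [Finset.sum_add_distrib]
          congr 1
          simp [← Nat.cast_smul_eq_nsmul ℝ]
        have := heqn
        rw [h1, h2] at this
        simp only [sub_smul]
        rw [Finset.sum_sub_distrib, this, sub_self]
      exact Fintype.linearIndependent_iff.mp hindep _ hsum
    have hi := hkey i
    rw [if_pos rfl, sub_eq_zero] at hi
    have hNle : (N : ℝ) ≤ (n : ℝ) * lam i := by
      rw [hi]; linarith [hζ0 i]
    have h0 : (0 : ℝ) < (n : ℝ) * lam i := lt_of_lt_of_le (by exact_mod_cast hNpos) hNle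
    by_contra hcon
    push_neg at hcon
    have : lam i = 0 := le_antisymm hcon (hlam0 i)
    rw [this, mul_zero] at h0
    exact lt_irrefl _ h0
  -- coefficients of g
  have hgspan : g ∈ Submodule.span ℝ (Set.range e) := (hle hg).2
  obtain ⟨μ, hμ⟩ := (Submodule.mem_span_range_iff_exists_fun ℝ).mp hgspan
  -- choose n large enough
  have hn : ∀ i, ∃ n : ℕ, -μ i / lam i ≤ (n : ℝ) := fun i => exists_nat_ge _
  choose f hf using hn
  refine ⟨Finset.univ.sup f, ?_, ?_⟩
  · exact G.add_mem hg (G.nsmul_mem hxG _)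
  · rw [hτ]
    set n := Finset.univ.sup f with hndef
    refine ⟨fun j => μ j + (n : ℝ) * lam j, ?_, ?_⟩
    · intro j
      have h1 : (f j : ℝ) ≤ (n : ℝ) := by
        exact_mod_cast Finset.le_sup (Finset.mem_univ j)
      have h2 : -μ j / lam j ≤ (n : ℝ) := le_trans (hf j) h1
      have h3 : -μ j ≤ (n : ℝ) * lam j := by
        rw [div_le_iff₀ (hlampos j)] at h2
        linarith
      show (0:ℝ) ≤ μ j + (n : ℝ) * lam j
      linarith
    · rw [← hμ, hxeq, Finset.smul_sum, ← Finset.sum_add_distrib]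
      exact Finset.sum_congr rfl fun j _ => by
        rw [add_smul, ← Nat.cast_smul_eq_nsmul ℝ, smul_smul]
end

section
/- Let e₁,…,e_m ∈ ℝ^d be linearly independent vectors with integer coordinates, let τ := {Σᵢ λᵢeᵢ : λᵢ ≥ 0 for all i}, let W := span_ℝ{e₁,…,e_m}, and let G be a finite-index additive subgroup of ℤ^d ∩ W. Then the additive subgroup of ℝ^d generated by Int(G ∩ τ) equals G. -/
/-!
Write elements of the span `W` of the `eᵢ` as combinations `∑ cᵢ eᵢ`. An element `g ∈ G` with all
coefficients strictly positive is interior in `G ∩ τ`: for `y = ∑ μᵢ eᵢ ∈ G ∩ τ`, the element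
`n • g - y` lies in `G ∩ τ` once `n λᵢ ≥ μᵢ` for all `i`. If `N` is the index of `G` in `ℤ^d ∩ W`,
then `x₀ = N • ∑ eᵢ ∈ G` has all coefficients equal to `N > 0`, and every `g ∈ G` is the
difference of the interior elements `g + n • x₀` and `n • x₀` for `n` large.
-/

open Filter

section Cone

variable (𝕜 : Type*) {M ι : Type*} [Field 𝕜] [LinearOrder 𝕜] [IsStrictOrderedRing 𝕜]
  [AddCommGroup M] [Module 𝕜 M] [Fintype ι]

def conicHull (e : ι → M) : Set M :=
  {x | ∃ lam : ι → 𝕜, (∀ i, 0 ≤ lam i) ∧ x = ∑ i, lam i • e i}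

variable {𝕜} [Archimedean 𝕜]

lemma eventually_forall_lt_natCast_mul (a : ι → 𝕜) {b : ι → 𝕜} (hb : ∀ i, 0 < b i) :
    ∀ᶠ n : ℕ in atTop, ∀ i, a i < n * b i :=
  eventually_all.2 fun i =>
    (tendsto_natCast_atTop_atTop.atTop_mul_const (hb i)).eventually_gt_atTop (a i)

lemma mem_setInterior_inter_conicHull {e : ι → M} {G : AddSubgroup M} {g : M} (hg : g ∈ G)
    {lam : ι → 𝕜} (hlam : ∀ i, 0 < lam i) (hg_eq : g = ∑ i, lam i • e i) :
    g ∈ setInterior ((G : Set M) ∩ conicHull 𝕜 e) := by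
  refine ⟨⟨hg, lam, fun i => (hlam i).le, hg_eq⟩, ?_⟩
  rintro y ⟨hyG, μ, -, rfl⟩
  obtain ⟨n, hn⟩ := (eventually_forall_lt_natCast_mul μ hlam).exists
  refine ⟨n, n • g - ∑ i, μ i • e i, ⟨sub_mem (nsmul_mem hg n) hyG, ?_⟩, by abel⟩
  refine ⟨fun i => n * lam i - μ i, fun i => sub_nonneg.2 (hn i).le, ?_⟩
  simp only [hg_eq, sub_smul, Finset.sum_sub_distrib, Finset.smul_sum, mul_smul,
    Nat.cast_smul_eq_nsmul]

theorem closure_setInterior_inter_conicHull_eq {e : ι → M} {G : AddSubgroup M}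
    (hG : ∀ g ∈ G, g ∈ Submodule.span 𝕜 (Set.range e)) {x₀ : M} (hx₀ : x₀ ∈ G)
    {a : ι → 𝕜} (ha : ∀ i, 0 < a i) (hx₀_eq : x₀ = ∑ i, a i • e i) :
    AddSubgroup.closure (setInterior ((G : Set M) ∩ conicHull 𝕜 e)) = G := by
  refine le_antisymm ((AddSubgroup.closure_le _).2 fun x hx => hx.1.1) fun g hg => ?_
  obtain ⟨c, rfl⟩ := (Submodule.mem_span_range_iff_exists_fun 𝕜).1 (hG g hg)
  obtain ⟨n, hn⟩ := (eventually_forall_lt_natCast_mul (-c) ha).exists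
  have hshift : (∑ i, c i • e i) + n • x₀ ∈ setInterior ((G : Set M) ∩ conicHull 𝕜 e) :=
    mem_setInterior_inter_conicHull (add_mem hg (nsmul_mem hx₀ n))
      (lam := fun i => c i + n * a i) (fun i => neg_lt_iff_pos_add'.1 (hn i)) (by
        simp only [hx₀_eq, add_smul, Finset.sum_add_distrib, Finset.smul_sum, mul_smul,
          Nat.cast_smul_eq_nsmul])
  have hx₀_int := mem_setInterior_inter_conicHull hx₀ ha hx₀_eq
  simpa using sub_mem (AddSubgroup.subset_closure hshift)
    (nsmul_mem (AddSubgroup.subset_closure hx₀_int) n)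

end Cone

theorem closure_setInterior_eq_general (d m : ℕ) (e : Fin m → (Fin d → ℝ))
    (hint : ∀ i j, ∃ z : ℤ, e i j = (z : ℝ))
    (τ : Set (Fin d → ℝ))
    (hτ : τ = {x | ∃ lam : Fin m → ℝ, (∀ i, 0 ≤ lam i) ∧ x = ∑ i, lam i • e i})
    (G : AddSubgroup (Fin d → ℝ))
    (hle : G ≤ intLattice d ⊓ (Submodule.span ℝ (Set.range e)).toAddSubgroup)
    (hfin : (G.addSubgroupOf
      (intLattice d ⊓ (Submodule.span ℝ (Set.range e)).toAddSubgroup)).FiniteIndex) :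
    AddSubgroup.closure (setInterior ((G : Set (Fin d → ℝ)) ∩ τ)) = G := by
  set L := intLattice d ⊓ (Submodule.span ℝ (Set.range e)).toAddSubgroup
  set N := G.relIndex L
  have hN : (0 : ℝ) < N := Nat.cast_pos.2 (Nat.pos_of_ne_zero hfin.index_ne_zero)
  have he : ∀ i, e i ∈ L := fun i => ⟨hint i, Submodule.subset_span ⟨i, rfl⟩⟩
  have hx₀ : N • ∑ i, e i ∈ G := G.nsmul_relIndex_mem (sum_mem fun i _ => he i)
  subst hτ
  exact closure_setInterior_inter_conicHull_eq (fun g hg => (hle hg).2) hx₀ (fun _ => hN)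
    (by simp only [Finset.smul_sum, Nat.cast_smul_eq_nsmul])

/-- Let `τ` be the cone generated by linearly independent integral vectors
`e₁,…,e_m`, `W` their span, and `G` a finite-index subgroup of `ℤ^d ∩ W`.
Then the subgroup generated by `Int(G ∩ τ)` equals `G`. -/
theorem closure_setInterior_eq (d m : ℕ) (e : Fin m → (Fin d → ℝ))
    (hindep : LinearIndependent ℝ e)
    (hint : ∀ i j, ∃ z : ℤ, e i j = (z : ℝ))
    (τ : Set (Fin d → ℝ))
    (hτ : τ = {x | ∃ lam : Fin m → ℝ, (∀ i, 0 ≤ lam i) ∧ x = ∑ i, lam i • e i})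
    (G : AddSubgroup (Fin d → ℝ))
    (hle : G ≤ intLattice d ⊓ (Submodule.span ℝ (Set.range e)).toAddSubgroup)
    (hfin : (G.addSubgroupOf
      (intLattice d ⊓ (Submodule.span ℝ (Set.range e)).toAddSubgroup)).FiniteIndex) :
    AddSubgroup.closure (setInterior ((G : Set (Fin d → ℝ)) ∩ τ)) = G :=
  closure_setInterior_eq_general d m e hint τ hτ G hle hfin
end

section
/- In Setting A, for every subset J ⊆ {1,…,d}, the additive subgroup of ℝ^d generated by Γ ∩ τ_J equals G_J. -/
/-- Setting A: `e₁,…,e_d` is an integral basis of `ℝ^d`; for `J ⊆ {1,…,d}`,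
`τ_J` is the cone generated by the `e_j`, `j ∈ J`, and `relint τ_J` its relative
interior; `G_J` are subgroups with `G_{{1,…,d}} = ℤ^d` and, for `J ⊆ J'`, `G_J` of
finite index in `G_{J'} ∩ span{e_j : j ∈ J}`; and `Γ = ⋃_J (G_J ∩ relint τ_J)`.
Then the subgroup generated by `Γ ∩ τ_J` equals `G_J` for every `J`. -/
theorem closure_gamma_inter_cone_eq (d : ℕ) (hd : 1 ≤ d)
    (e : Fin d → (Fin d → ℝ))
    (hindep : LinearIndependent ℝ e)
    (hspan : Submodule.span ℝ (Set.range e) = ⊤)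
    (hint : ∀ i j, ∃ z : ℤ, e i j = (z : ℝ))
    (τ : Finset (Fin d) → Set (Fin d → ℝ))
    (hτ : ∀ J, τ J = {x | ∃ lam : Fin d → ℝ,
      (∀ j ∈ J, 0 ≤ lam j) ∧ x = ∑ j ∈ J, lam j • e j})
    (relint : Finset (Fin d) → Set (Fin d → ℝ))
    (hrelint : ∀ J, relint J = {x | ∃ lam : Fin d → ℝ,
      (∀ j ∈ J, 0 < lam j) ∧ x = ∑ j ∈ J, lam j • e j})
    (G : Finset (Fin d) → AddSubgroup (Fin d → ℝ))
    (hGtop : G Finset.univ = intLattice d)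
    (hGle : ∀ J J' : Finset (Fin d), J ⊆ J' →
      G J ≤ (G J') ⊓ (Submodule.span ℝ (e '' (J : Set (Fin d)))).toAddSubgroup)
    (hGfin : ∀ J J' : Finset (Fin d), J ⊆ J' →
      ((G J).addSubgroupOf
        ((G J') ⊓ (Submodule.span ℝ (e '' (J : Set (Fin d)))).toAddSubgroup)).FiniteIndex)
    (Γ : Set (Fin d → ℝ))
    (hΓ : Γ = ⋃ J : Finset (Fin d), ((G J : Set (Fin d → ℝ)) ∩ relint J)) :
    ∀ J : Finset (Fin d), AddSubgroup.closure (Γ ∩ τ J) = G J := by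
  intro J
  -- coefficient uniqueness
  have hcoeff : ∀ f g : Fin d → ℝ, ∑ j, f j • e j = ∑ j, g j • e j → f = g := by
    intro f g h
    funext i
    have h0 : ∑ j, (f - g) j • e j = 0 := by
      simp only [Pi.sub_apply, sub_smul, Finset.sum_sub_distrib, h, sub_self]
    have := Fintype.linearIndependent_iff.mp hindep (f - g) h0 i
    simpa [sub_eq_zero] using this
  have hext : ∀ (K : Finset (Fin d)) (lam : Fin d → ℝ),
      ∑ j ∈ K, lam j • e j = ∑ j, (if j ∈ K then lam j else 0) • e j := by
    intro K lam
    have h1 : ∑ j ∈ K, (if j ∈ K then lam j else 0) • e j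
        = ∑ j, (if j ∈ K then lam j else 0) • e j :=
      Finset.sum_subset K.subset_univ (fun j _ hj => by rw [if_neg hj, zero_smul])
    rw [← h1]
    exact Finset.sum_congr rfl fun j hj => by rw [if_pos hj]
  have hRT : ∀ K, relint K ⊆ τ K := by
    intro K
    rw [hrelint, hτ]
    rintro x ⟨lam, hl, rfl⟩
    exact ⟨lam, fun j hj => (hl j hj).le, rfl⟩
  apply le_antisymm
  · rw [AddSubgroup.closure_le]
    rintro x ⟨hxΓ, hxτ⟩
    rw [hΓ, Set.mem_iUnion] at hxΓ
    obtain ⟨J', hxG, hxR⟩ := hxΓ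
    rw [hrelint] at hxR
    rw [hτ] at hxτ
    obtain ⟨lam, hlam, hx1⟩ := hxR
    obtain ⟨mu, hmu, hx2⟩ := hxτ
    have heq : (fun j => if j ∈ J' then lam j else 0)
        = (fun j => if j ∈ J then mu j else 0) :=
      hcoeff _ _ (by rw [← hext, ← hext, ← hx1, ← hx2])
    have hsub : J' ⊆ J := by
      intro j hj
      by_contra hjJ
      have hc := congrFun heq j
      rw [if_pos hj, if_neg hjJ] at hc
      exact absurd hc (ne_of_gt (hlam j hj))
    exact ((AddSubgroup.mem_inf).mp (hGle J' J hsub hxG)).1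
  · intro g hg
    have hgspan : g ∈ Submodule.span ℝ (e '' (J : Set (Fin d))) :=
      ((AddSubgroup.mem_inf).mp (hGle J J (subset_refl J) hg)).2
    have himg : e '' (J : Set (Fin d)) = ↑(J.image e) := (Finset.coe_image).symm
    rw [himg] at hgspan
    obtain ⟨f, -, hf⟩ := Submodule.mem_span_finset.mp hgspan
    set mu : Fin d → ℝ := fun j => f (e j) with hmu
    have hgsum : g = ∑ j ∈ J, mu j • e j := by
      rw [← hf, Finset.sum_image (fun a _ b _ hab => hindep.injective hab)]
    -- the vector s = ∑_{j∈J} e_j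
    set s : Fin d → ℝ := ∑ j ∈ J, e j with hs
    set H := G Finset.univ ⊓ (Submodule.span ℝ (e '' (J : Set (Fin d)))).toAddSubgroup with hH
    have hsH : s ∈ H := by
      rw [hH, AddSubgroup.mem_inf]
      constructor
      · rw [hGtop]
        exact AddSubgroup.sum_mem _ fun j _ => hint j
      · exact Submodule.sum_mem _ fun j hj => Submodule.subset_span ⟨j, hj, rfl⟩
    haveI hfin := hGfin J Finset.univ (Finset.subset_univ J)
    set N := ((G J).addSubgroupOf H).index with hNdef
    have hNpos : 0 < N := Nat.pos_of_ne_zero hfin.index_ne_zero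
    have hvG : N • s ∈ G J := by
      have h1 := AddSubgroup.nsmul_index_mem ((G J).addSubgroupOf H) ⟨s, hsH⟩
      rw [AddSubgroup.mem_addSubgroupOf] at h1
      exact h1
    -- choose m bounding -mu
    obtain ⟨M, hM⟩ := Finset.exists_le (J.image (fun j => -mu j))
    obtain ⟨m, hm⟩ := exists_nat_ge M
    set k : ℕ := (m + 1) * N with hk
    have hkpos : (0 : ℝ) < k := by
      have : 0 < k := Nat.mul_pos (Nat.succ_pos m) hNpos
      exact_mod_cast this
    have hmuk : ∀ j ∈ J, 0 < mu j + (k : ℝ) := by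
      intro j hj
      have h1 : -mu j ≤ M := hM _ (Finset.mem_image_of_mem _ hj)
      have h2 : (m : ℝ) + 1 ≤ (k : ℝ) := by
        have hN1 : (1 : ℝ) ≤ (N : ℝ) := by exact_mod_cast hNpos
        rw [hk]
        push_cast
        nlinarith
      linarith
    set w : Fin d → ℝ := k • s with hw
    have hwG : w ∈ G J := by
      rw [hw, hk, mul_smul]
      exact AddSubgroup.nsmul_mem _ hvG _

    have hwsum : w = ∑ j ∈ J, (k : ℝ) • e j := by
      rw [hw, hs, Finset.smul_sum]
      exact Finset.sum_congr rfl fun j _ => (Nat.cast_smul_eq_nsmul ℝ k (e j)).symm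
    have hwR : w ∈ relint J := by
      rw [hrelint]
      exact ⟨fun _ => (k : ℝ), fun j _ => hkpos, hwsum⟩
    have hasum : g + w = ∑ j ∈ J, (mu j + (k : ℝ)) • e j := by
      rw [hgsum, hwsum, ← Finset.sum_add_distrib]
      exact Finset.sum_congr rfl fun j _ => (add_smul _ _ _).symm
    have haR : g + w ∈ relint J := by
      rw [hrelint]
      exact ⟨fun j => mu j + (k : ℝ), hmuk, hasum⟩
    have haG : g + w ∈ G J := AddSubgroup.add_mem _ hg hwG
    have hmemΓ : ∀ x, x ∈ G J → x ∈ relint J → x ∈ Γ ∩ τ J := by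
      intro x h1 h2
      refine ⟨?_, hRT J h2⟩
      rw [hΓ, Set.mem_iUnion]
      exact ⟨J, h1, h2⟩
    have ha' : g + w ∈ AddSubgroup.closure (Γ ∩ τ J) :=
      AddSubgroup.subset_closure (hmemΓ _ haG haR)
    have hw' : w ∈ AddSubgroup.closure (Γ ∩ τ J) :=
      AddSubgroup.subset_closure (hmemΓ _ hwG hwR)
    have : g = (g + w) - w := by ring_nf
    rw [this]
    exact sub_mem ha' hw'
end

section
/- In Setting A, the set Γ contains 0, is closed under addition (hence is a submonoid of ℤ^d), and is semisaturated in ℤ^d: for every m ∈ ℤ^d, if 2•m ∈ Γ and 3•m ∈ Γ then m ∈ Γ. -/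
/-!
Write `x = ∑ⱼ cⱼ eⱼ` in the basis `e`. Then `x ∈ relint τ_J` says exactly that the coordinates
of `x` are positive on `J` and vanish off `J`, so `J` is determined by `x` and is unchanged when
`x` is replaced by a positive multiple. Hence the cones `relint τ_J` are disjoint, and
`relint τ_J + relint τ_K ⊆ relint τ_{J ∪ K}`, which together with `G_J, G_K ≤ G_{J ∪ K}` makes
`Γ` a submonoid of `G_{1,…,d} = ℤ^d`. If `2m ∈ G_J ∩ relint τ_J` and `3m ∈ G_K ∩ relint τ_K`,
then `m` lies in both cones, so `J = K` and `m = 3m - 2m ∈ G_J`.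
-/

namespace Module.Basis

variable {ι R M : Type*} [Ring R] [AddCommGroup M] [Module R M] (b : Basis ι R M)

theorem repr_sum_smul_apply [DecidableEq ι] (J : Finset ι) (c : ι → R) (i : ι) :
    b.repr (∑ j ∈ J, c j • b j) i = if i ∈ J then c i else 0 := by
  simp [Finsupp.single_apply]

variable [LinearOrder R]

def relintCone (J : Finset ι) : Set M :=
  {x | (∀ j ∈ J, 0 < b.repr x j) ∧ ∀ j ∉ J, b.repr x j = 0}

theorem setOf_exists_pos_sum_eq_relintCone (J : Finset ι) :
    {x | ∃ c : ι → R, (∀ j ∈ J, 0 < c j) ∧ x = ∑ j ∈ J, c j • b j} = b.relintCone J := by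
  classical
  ext x
  constructor
  · rintro ⟨c, hc, rfl⟩
    exact ⟨fun j hj => by rw [repr_sum_smul_apply, if_pos hj]; exact hc j hj,
      fun j hj => by rw [repr_sum_smul_apply, if_neg hj]⟩
  · rintro ⟨hpos, hzero⟩
    refine ⟨b.repr x, hpos, ?_⟩
    conv_lhs => rw [← b.linearCombination_repr x]
    rw [Finsupp.linearCombination_apply]
    exact Finsupp.sum_of_support_subset _ (fun j hj => by_contra fun hjJ =>
      Finsupp.mem_support_iff.mp hj (hzero j hjJ)) _ (fun _ _ => zero_smul R _)

variable {b}

theorem repr_nonneg_of_mem_relintCone {J : Finset ι} {x : M} (hx : x ∈ b.relintCone J) (j : ι) :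
    0 ≤ b.repr x j := by
  by_cases hj : j ∈ J
  · exact (hx.1 j hj).le
  · exact (hx.2 j hj).ge

theorem zero_mem_relintCone_empty [IsStrictOrderedRing R] : (0 : M) ∈ b.relintCone ∅ := by
  simp [relintCone]

theorem add_mem_relintCone_union [IsStrictOrderedRing R] [DecidableEq ι] {J K : Finset ι}
    {x y : M} (hx : x ∈ b.relintCone J) (hy : y ∈ b.relintCone K) :
    x + y ∈ b.relintCone (J ∪ K) := by
  refine ⟨fun j hj => ?_, fun j hj => ?_⟩
  · rw [map_add, Finsupp.add_apply]
    rcases Finset.mem_union.mp hj with hj | hj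
    · exact add_pos_of_pos_of_nonneg (hx.1 j hj) (repr_nonneg_of_mem_relintCone hy j)
    · exact add_pos_of_nonneg_of_pos (repr_nonneg_of_mem_relintCone hx j) (hy.1 j hj)
  · rw [Finset.mem_union, not_or] at hj
    rw [map_add, Finsupp.add_apply, hx.2 j hj.1, hy.2 j hj.2, add_zero]

theorem nsmul_mem_relintCone_iff [IsStrictOrderedRing R] {J : Finset ι} {x : M} {n : ℕ}
    (hn : n ≠ 0) :
    n • x ∈ b.relintCone J ↔ x ∈ b.relintCone J := by
  simp only [relintCone, Set.mem_ofPred_eq, map_nsmul, Finsupp.smul_apply, nsmul_pos_iff hn,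
    nsmul_eq_zero_iff_right hn]

theorem eq_of_mem_relintCone {J K : Finset ι} {x : M} (hJ : x ∈ b.relintCone J)
    (hK : x ∈ b.relintCone K) : J = K := by
  have key : ∀ {J K : Finset ι}, x ∈ b.relintCone J → x ∈ b.relintCone K → J ⊆ K :=
    fun hJ hK j hj => by_contra fun hjK => (hJ.1 j hj).ne' (hK.2 j hjK)
  exact (key hJ hK).antisymm (key hK hJ)

variable (b)

def relintConeUnion (G : Finset ι → AddSubgroup M) : Set M :=
  ⋃ J, (G J : Set M) ∩ b.relintCone J

variable {b} {G : Finset ι → AddSubgroup M}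

theorem zero_mem_relintConeUnion [IsStrictOrderedRing R] : (0 : M) ∈ b.relintConeUnion G :=
  Set.mem_iUnion.mpr ⟨∅, (G ∅).zero_mem, zero_mem_relintCone_empty⟩

theorem add_mem_relintConeUnion [IsStrictOrderedRing R] (hG : Monotone G) {x y : M}
    (hx : x ∈ b.relintConeUnion G) (hy : y ∈ b.relintConeUnion G) :
    x + y ∈ b.relintConeUnion G := by
  obtain ⟨J, hxG, hxJ⟩ := Set.mem_iUnion.mp hx
  obtain ⟨K, hyG, hyK⟩ := Set.mem_iUnion.mp hy
  classical
  exact Set.mem_iUnion.mpr ⟨J ∪ K,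
    add_mem (hG Finset.subset_union_left hxG) (hG Finset.subset_union_right hyG),
    add_mem_relintCone_union hxJ hyK⟩

theorem relintConeUnion_subset [Fintype ι] (hG : Monotone G) :
    b.relintConeUnion G ⊆ G Finset.univ :=
  Set.iUnion_subset fun J => Set.inter_subset_left.trans (hG (Finset.subset_univ J))

theorem mem_relintConeUnion_of_two_nsmul_of_three_nsmul [IsStrictOrderedRing R] {m : M}
    (h2 : 2 • m ∈ b.relintConeUnion G) (h3 : 3 • m ∈ b.relintConeUnion G) :
    m ∈ b.relintConeUnion G := by
  obtain ⟨J, h2G, h2J⟩ := Set.mem_iUnion.mp h2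
  obtain ⟨K, h3G, h3K⟩ := Set.mem_iUnion.mp h3
  have hmJ : m ∈ b.relintCone J := (nsmul_mem_relintCone_iff two_ne_zero).mp h2J
  have hKJ : K = J :=
    eq_of_mem_relintCone ((nsmul_mem_relintCone_iff three_ne_zero).mp h3K) hmJ
  subst hKJ
  have hm : 3 • m - 2 • m = m := by rw [succ_nsmul, add_sub_cancel_left]
  exact Set.mem_iUnion.mpr ⟨K, hm ▸ sub_mem h3G h2G, hmJ⟩

end Module.Basis

theorem gamma_semisaturated_general (d : ℕ)
    (e : Fin d → (Fin d → ℝ))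
    (hindep : LinearIndependent ℝ e)
    (hspan : Submodule.span ℝ (Set.range e) = ⊤)
    (relint : Finset (Fin d) → Set (Fin d → ℝ))
    (hrelint : ∀ J, relint J = {x | ∃ lam : Fin d → ℝ,
      (∀ j ∈ J, 0 < lam j) ∧ x = ∑ j ∈ J, lam j • e j})
    (G : Finset (Fin d) → AddSubgroup (Fin d → ℝ))
    (hGtop : G Finset.univ = intLattice d)
    (hGle : ∀ J J' : Finset (Fin d), J ⊆ J' →
      G J ≤ (G J') ⊓ (Submodule.span ℝ (e '' (J : Set (Fin d)))).toAddSubgroup)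
    (Γ : Set (Fin d → ℝ))
    (hΓ : Γ = ⋃ J : Finset (Fin d), ((G J : Set (Fin d → ℝ)) ∩ relint J)) :
    (0 : Fin d → ℝ) ∈ Γ ∧
    (∀ x ∈ Γ, ∀ y ∈ Γ, x + y ∈ Γ) ∧
    Γ ⊆ (intLattice d : Set (Fin d → ℝ)) ∧
    (∀ m ∈ intLattice d, 2 • m ∈ Γ → 3 • m ∈ Γ → m ∈ Γ) := by
  set b := Module.Basis.mk hindep hspan.ge
  have hrelint' : ∀ J, relint J = b.relintCone J := fun J => by
    rw [hrelint, ← b.setOf_exists_pos_sum_eq_relintCone, Module.Basis.coe_mk]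
  have hG : Monotone G := fun J J' hJJ' => (hGle J J' hJJ').trans inf_le_left
  have hΓ' : Γ = b.relintConeUnion G := by
    simp only [hΓ, hrelint', Module.Basis.relintConeUnion]
  subst hΓ'
  exact ⟨Module.Basis.zero_mem_relintConeUnion,
    fun x hx y hy => Module.Basis.add_mem_relintConeUnion hG hx hy,
    hGtop ▸ Module.Basis.relintConeUnion_subset hG,
    fun m _ => Module.Basis.mem_relintConeUnion_of_two_nsmul_of_three_nsmul⟩

/-- Setting A: `e₁,…,e_d` is an integral basis of `ℝ^d`; for `J ⊆ {1,…,d}`,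
`τ_J` is the cone generated by the `e_j`, `j ∈ J`, and `relint τ_J` its relative
interior; `G_J` are subgroups with `G_{{1,…,d}} = ℤ^d` and, for `J ⊆ J'`, `G_J` of
finite index in `G_{J'} ∩ span{e_j : j ∈ J}`; and `Γ = ⋃_J (G_J ∩ relint τ_J)`.
Then `Γ` is a submonoid of `ℤ^d` which is semisaturated in `ℤ^d`. -/
theorem gamma_semisaturated (d : ℕ) (hd : 1 ≤ d)
    (e : Fin d → (Fin d → ℝ))
    (hindep : LinearIndependent ℝ e)
    (hspan : Submodule.span ℝ (Set.range e) = ⊤)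
    (hint : ∀ i j, ∃ z : ℤ, e i j = (z : ℝ))
    (τ : Finset (Fin d) → Set (Fin d → ℝ))
    (hτ : ∀ J, τ J = {x | ∃ lam : Fin d → ℝ,
      (∀ j ∈ J, 0 ≤ lam j) ∧ x = ∑ j ∈ J, lam j • e j})
    (relint : Finset (Fin d) → Set (Fin d → ℝ))
    (hrelint : ∀ J, relint J = {x | ∃ lam : Fin d → ℝ,
      (∀ j ∈ J, 0 < lam j) ∧ x = ∑ j ∈ J, lam j • e j})
    (G : Finset (Fin d) → AddSubgroup (Fin d → ℝ))
    (hGtop : G Finset.univ = intLattice d)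
    (hGle : ∀ J J' : Finset (Fin d), J ⊆ J' →
      G J ≤ (G J') ⊓ (Submodule.span ℝ (e '' (J : Set (Fin d)))).toAddSubgroup)
    (hGfin : ∀ J J' : Finset (Fin d), J ⊆ J' →
      ((G J).addSubgroupOf
        ((G J') ⊓ (Submodule.span ℝ (e '' (J : Set (Fin d)))).toAddSubgroup)).FiniteIndex)
    (Γ : Set (Fin d → ℝ))
    (hΓ : Γ = ⋃ J : Finset (Fin d), ((G J : Set (Fin d → ℝ)) ∩ relint J)) :
    (0 : Fin d → ℝ) ∈ Γ ∧
    (∀ x ∈ Γ, ∀ y ∈ Γ, x + y ∈ Γ) ∧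
    Γ ⊆ (intLattice d : Set (Fin d → ℝ)) ∧
    (∀ m ∈ intLattice d, 2 • m ∈ Γ → 3 • m ∈ Γ → m ∈ Γ) :=
  gamma_semisaturated_general d e hindep hspan relint hrelint G hGtop hGle Γ hΓ
end

section
/- Let B be a commutative ring and A a subring of B. Then the following two conditions are equivalent: (1) for every f ∈ B, if f² ∈ A and f³ ∈ A then f ∈ A; (2) for every f ∈ B, if there exists N ∈ ℕ such that fⁿ ∈ A for all integers n > N, then f ∈ A. -/
/-! If every power of `f` beyond `f ^ (N + 1)` lies in `A`, then so do the square and cube of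
`f ^ n` for each `n > N`, hence `f ^ n` itself; descending on `N` reaches `f`. Conversely, every
`n ≥ 2` is a sum of `2`s and `3`s, so `f ^ 2, f ^ 3 ∈ A` give `f ^ n ∈ A` for all `n > 1`. -/

theorem pow_mem_of_sq_mem_of_pow_three_mem {M : Type*} [Monoid M] (S : Submonoid M) {f : M}
    (h2 : f ^ 2 ∈ S) (h3 : f ^ 3 ∈ S) {n : ℕ} (hn : 2 ≤ n) : f ^ n ∈ S := by
  obtain ⟨k, rfl | rfl⟩ := Nat.even_or_odd' n
  · rw [pow_mul]
    exact pow_mem h2 k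
  · obtain ⟨j, rfl⟩ : ∃ j, k = j + 1 := ⟨k - 1, by omega⟩
    have hsplit : f ^ (2 * (j + 1) + 1) = f ^ 3 * (f ^ 2) ^ j := by
      rw [← pow_mul, ← pow_add]
      congr 1
      ring
    rw [hsplit]
    exact mul_mem h3 (pow_mem h2 j)

theorem mem_of_forall_lt_pow_mem {M : Type*} [Monoid M] {S : Set M}
    (hS : ∀ f : M, f ^ 2 ∈ S → f ^ 3 ∈ S → f ∈ S) {f : M} :
    ∀ N : ℕ, (∀ n : ℕ, N < n → f ^ n ∈ S) → f ∈ S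
  | 0, h => by simpa using h 1 one_pos
  | N + 1, h => mem_of_forall_lt_pow_mem hS N fun n hn =>
      hS _ (by rw [← pow_mul]; exact h _ (by omega)) (by rw [← pow_mul]; exact h _ (by omega))

/-- A subring `A` of a commutative ring `B` is *seminormal* in `B` if it satisfies
these equivalent conditions. -/
theorem seminormal_iff {B : Type*} [CommRing B] (A : Subring B) :
    (∀ f : B, f ^ 2 ∈ A → f ^ 3 ∈ A → f ∈ A) ↔
    (∀ f : B, (∃ N : ℕ, ∀ n : ℕ, N < n → f ^ n ∈ A) → f ∈ A) := by
  constructor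
  · rintro h f ⟨N, hN⟩
    exact mem_of_forall_lt_pow_mem (S := (A : Set B)) h N hN
  · intro h f hf2 hf3
    exact h f ⟨1, fun n hn => pow_mem_of_sq_mem_of_pow_three_mem A.toSubmonoid hf2 hf3 hn⟩
end

section
/- Let M be an additive abelian group, let S be a submonoid of M that is semisaturated in M, and let v ∈ S. Then the submonoid S + ℤv := {s + n•v : s ∈ S, n ∈ ℤ} is semisaturated in M. -/
/-!
Shift `m` by a large negative multiple `k • v`: the `ℤv`-components of `2 • (m - k • v)` and
`3 • (m - k • v)` become nonnegative, so both lie in `S` (as `v ∈ S`), and semisaturation of `S`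
gives `m - k • v ∈ S`.
-/

namespace AddSubmonoid

variable {M : Type*} [AddCommGroup M] {S : AddSubmonoid M} {v : M}

theorem zsmul_mem_of_nonneg (hv : v ∈ S) {n : ℤ} (hn : 0 ≤ n) : n • v ∈ S := by
  lift n to ℕ using hn
  rw [natCast_zsmul]
  exact S.nsmul_mem hv n

theorem add_zsmul_mem_of_nonneg {s : M} (hs : s ∈ S) (hv : v ∈ S) {n : ℤ} (hn : 0 ≤ n) :
    s + n • v ∈ S :=
  S.add_mem hs (zsmul_mem_of_nonneg hv hn)

end AddSubmonoid

theorem nsmul_sub_zsmul_eq_of_nsmul_eq {M : Type*} [AddCommGroup M] {c : ℕ} {m s v : M} {n : ℤ}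
    (h : c • m = s + n • v) (k : ℤ) : c • (m - k • v) = s + (n - c * k) • v := by
  rw [smul_sub, h, sub_smul, mul_smul, natCast_zsmul]
  abel

/-- If `S` is a semisaturated submonoid of an additive abelian group `M` and
`v ∈ S`, then the submonoid `S + ℤv` is semisaturated in `M`. -/
theorem add_zmultiples_semisaturated {M : Type*} [AddCommGroup M]
    (S : AddSubmonoid M)
    (hsemi : ∀ m : M, 2 • m ∈ S → 3 • m ∈ S → m ∈ S)
    (v : M) (hv : v ∈ S)
    (T : Set M) (hT : T = {m : M | ∃ s ∈ S, ∃ n : ℤ, m = s + n • v}) :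
    ∀ m : M, 2 • m ∈ T → 3 • m ∈ T → m ∈ T := by
  subst hT
  rintro m ⟨s₂, hs₂, n₂, h₂⟩ ⟨s₃, hs₃, n₃, h₃⟩
  set k : ℤ := -(|n₂| + |n₃|)
  have hshift : m - k • v ∈ S := by
    apply hsemi
    · rw [nsmul_sub_zsmul_eq_of_nsmul_eq h₂ k]
      exact AddSubmonoid.add_zsmul_mem_of_nonneg hs₂ hv (by push_cast; grind)
    · rw [nsmul_sub_zsmul_eq_of_nsmul_eq h₃ k]
      exact AddSubmonoid.add_zsmul_mem_of_nonneg hs₃ hv (by push_cast; grind)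
  exact ⟨m - k • v, hshift, k, (sub_add_cancel m _).symm⟩
end
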